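/- arXiv:1303.0957 — 3 statements merged into one kernel-verified Lean document; each statement's English description precedes it below -/
import Mathlib

section
/- There is no constant c > 0 such that ‖u‖_∞² ≤ ‖u‖‖u'‖ − c‖u‖² holds for all u ∈ H¹₀(0,L): the optimal additive correction constant in this inequality is zero. -/
open Real MeasureTheory intervalIntegral

/-- `u ∈ H¹₀(0,L)`: absolutely continuous `u(x) = ∫₀ˣ v(t) dt` with `u(L) = 0` and
square integrable derivative `v`. -/
def H10mem (L : ℝ) (u v : ℝ → ℝ) : Prop :=
  (∀ x : ℝ, u x = ∫ t in (0:ℝ)..x, v t) ∧ u L = 0 ∧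
  (∀ a b : ℝ, IntervalIntegrable v volume a b) ∧
  IntervalIntegrable (fun x => (v x) ^ 2) volume 0 L

/-! The profiles `u_k(x) = sinh (k · min x (L - x))` vanish at `0` and `L`, peak at `L/2`,
and satisfy `u_k'² = k² (1 + u_k²)`. Hence `‖u_k‖ ‖u_k'‖ ≤ k (‖u_k‖² + L/2) = sinh (k L) / 2`,
so with `a = k L / 2` the defect `‖u_k‖ ‖u_k'‖ - u_k(L/2)²` is at most
`sinh (2a) / 2 - sinh² a < 1/2`, whereas `‖u_k‖² = sinh (k L) / (2 k) - L / 2` is unbounded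
as `k → ∞`. -/

lemma sq_div_two_le_sinh {t : ℝ} (ht : 0 ≤ t) : t ^ 2 / 2 ≤ sinh t := by
  have hsinh : t / 2 ≤ sinh (t / 2) := self_le_sinh_iff.2 (by linarith)
  have hcosh : sinh (t / 2) ≤ cosh (t / 2) := by
    linarith [cosh_sub_sinh (t / 2), exp_pos (-(t / 2))]
  rw [show t = 2 * (t / 2) by ring, sinh_two_mul]
  nlinarith

lemma sinh_two_mul_div_two_sub_sinh_sq_lt (a : ℝ) : sinh (2 * a) / 2 - sinh a ^ 2 < 1 / 2 := by
  have hexp : exp a * exp (-a) = 1 := by rw [← exp_add, add_neg_cancel, exp_zero]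
  have hdefect : sinh (2 * a) / 2 - sinh a ^ 2 = (1 - exp (-a) ^ 2) / 2 := by
    rw [sinh_two_mul, ← sub_eq_zero,
      show sinh a = cosh a - exp (-a) by rw [← cosh_sub_sinh]; ring, cosh_eq]
    linear_combination (1 / 2 : ℝ) * hexp
  rw [hdefect]
  nlinarith [exp_pos (-a)]

lemma sqrt_mul_sqrt_sq_mul_add_le {A L k : ℝ} (hA : 0 ≤ A) (hL : 0 ≤ L) (hk : 0 ≤ k) :
    √A * √(k ^ 2 * (L + A)) ≤ k * (A + L / 2) :=
  calc √A * √(k ^ 2 * (L + A)) = √(A * (k ^ 2 * (L + A))) := (sqrt_mul hA _).symm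
    _ ≤ √((k * (A + L / 2)) ^ 2) := sqrt_le_sqrt (by nlinarith [sq_nonneg (k * L)])
    _ = k * (A + L / 2) := sqrt_sq (by positivity)

lemma integral_sinh_mul_sq {k : ℝ} (hk : k ≠ 0) (a b : ℝ) :
    ∫ x in a..b, sinh (k * x) ^ 2 =
      (sinh (2 * k * b) - sinh (2 * k * a)) / (4 * k) - (b - a) / 2 := by
  have hderiv (x : ℝ) :
      HasDerivAt (fun x => sinh (2 * k * x) / (4 * k) - x / 2) (sinh (k * x) ^ 2) x := by
    have h := ((((hasDerivAt_id' x).const_mul (2 * k)).sinh).div_const (4 * k)).fun_sub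
      ((hasDerivAt_id' x).div_const 2)
    refine h.congr_deriv ?_
    rw [show 2 * k * x = 2 * (k * x) by ring, cosh_two_mul, cosh_sq]
    field_simp
    ring
  rw [integral_eq_sub_of_hasDerivAt (fun x _ => hderiv x)
    ((by fun_prop : Continuous fun x => sinh (k * x) ^ 2).intervalIntegrable a b)]
  ring

lemma integral_comp_min_sub_self {f : ℝ → ℝ} (hf : Continuous f) {L : ℝ} (hL : 0 ≤ L) :
    ∫ x in (0:ℝ)..L, f (min x (L - x)) = 2 * ∫ x in (0:ℝ)..L / 2, f x := by
  have hint (a b : ℝ) : IntervalIntegrable (fun x => f (min x (L - x))) volume a b :=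
    (by fun_prop : Continuous _).intervalIntegrable a b
  have hleft : ∫ x in (0:ℝ)..L / 2, f (min x (L - x)) = ∫ x in (0:ℝ)..L / 2, f x :=
    integral_congr fun x hx => by
      rw [Set.uIcc_of_le (by linarith)] at hx
      rw [min_eq_left (by linarith [hx.2])]
  have hright : ∫ x in L / 2..L, f (min x (L - x)) = ∫ x in (0:ℝ)..L / 2, f x := by
    rw [integral_congr (g := fun x => f (L - x)) fun x hx => by
      rw [Set.uIcc_of_le (by linarith)] at hx
      rw [min_eq_right (by linarith [hx.1])]]
    rw [integral_comp_sub_left, sub_self, show L - L / 2 = L / 2 by ring]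
  rw [← integral_add_adjacent_intervals (hint 0 (L / 2)) (hint (L / 2) L), hleft, hright, two_mul]

noncomputable def sinhTent (L k x : ℝ) : ℝ := sinh (k * min x (L - x))

noncomputable def sinhTentDeriv (L k x : ℝ) : ℝ :=
  (if x ≤ L / 2 then k else -k) * cosh (k * min x (L - x))

section sinhTent

variable {L : ℝ} (k : ℝ)

lemma continuous_sinhTent : Continuous (sinhTent L k) := by
  unfold sinhTent; fun_prop

lemma sinhTent_half : sinhTent L k (L / 2) = sinh (k * (L / 2)) := by
  rw [sinhTent, show L - L / 2 = L / 2 by ring, min_self]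

lemma sinhTentDeriv_sq (x : ℝ) : sinhTentDeriv L k x ^ 2 = k ^ 2 * (1 + sinhTent L k x ^ 2) := by
  rw [sinhTentDeriv, sinhTent, mul_pow, cosh_sq']
  split_ifs <;> ring

lemma hasDerivAt_sinhTent {x : ℝ} (hx : x ≠ L / 2) :
    HasDerivAt (sinhTent L k) (sinhTentDeriv L k x) x := by
  rcases hx.lt_or_gt with hx | hx
  · have hloc : (fun y => sinh (k * y)) =ᶠ[nhds x] sinhTent L k := by
      filter_upwards [Iio_mem_nhds hx] with y hy
      rw [sinhTent, min_eq_left (by linarith [Set.mem_Iio.1 hy])]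
    rw [sinhTentDeriv, if_pos hx.le, min_eq_left (by linarith)]
    exact ((((hasDerivAt_id' x).const_mul k).sinh).congr_of_eventuallyEq hloc.symm).congr_deriv
      (by ring)
  · have hloc : (fun y => sinh (k * (L - y))) =ᶠ[nhds x] sinhTent L k := by
      filter_upwards [Ioi_mem_nhds hx] with y hy
      rw [sinhTent, min_eq_right (by linarith [Set.mem_Ioi.1 hy])]
    rw [sinhTentDeriv, if_neg hx.not_ge, min_eq_right (by linarith)]
    exact ((((hasDerivAt_id' x).const_sub L).const_mul k).sinh.congr_of_eventuallyEq
      hloc.symm).congr_deriv (by ring)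

lemma intervalIntegrable_sinhTentDeriv (a b : ℝ) :
    IntervalIntegrable (sinhTentDeriv L k) volume a b := by
  have hbound : Continuous fun x => |k| * cosh (k * min x (L - x)) := by fun_prop
  refine IntervalIntegrable.mono_fun' (hbound.intervalIntegrable a b) ?_ (ae_of_all _ fun x => ?_)
  · exact ((measurable_const.ite measurableSet_Iic measurable_const).mul
      (by fun_prop : Continuous _).measurable).aestronglyMeasurable
  · simp only [sinhTentDeriv]
    rw [norm_mul, norm_of_nonneg (cosh_pos _).le, Real.norm_eq_abs]
    split_ifs <;> simp

lemma sinhTent_eq_integral (hL : 0 ≤ L) (x : ℝ) :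
    sinhTent L k x = ∫ t in (0:ℝ)..x, sinhTentDeriv L k t := by
  rw [integral_eq_of_hasDerivAt_off_countable _ _ (Set.countable_singleton (L / 2))
    (continuous_sinhTent k).continuousOn (fun t ht => hasDerivAt_sinhTent k ht.2)
    (intervalIntegrable_sinhTentDeriv k 0 x)]
  simp [sinhTent, hL]

lemma h10mem_sinhTent (hL : 0 ≤ L) : H10mem L (sinhTent L k) (sinhTentDeriv L k) := by
  refine ⟨sinhTent_eq_integral k hL, by simp [sinhTent, hL],
    intervalIntegrable_sinhTentDeriv k, ?_⟩
  simp_rw [sinhTentDeriv_sq]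
  have hcont : Continuous fun x => k ^ 2 * (1 + sinhTent L k x ^ 2) :=
    continuous_const.mul (continuous_const.add ((continuous_sinhTent k).pow 2))
  exact hcont.intervalIntegrable 0 L

lemma integral_sq_sinhTent (hL : 0 ≤ L) (hk : k ≠ 0) :
    ∫ x in (0:ℝ)..L, sinhTent L k x ^ 2 = sinh (k * L) / (2 * k) - L / 2 := by
  simp only [sinhTent]
  rw [integral_comp_min_sub_self (f := fun y => sinh (k * y) ^ 2) (by fun_prop) hL,
    integral_sinh_mul_sq hk, mul_zero, sinh_zero, show 2 * k * (L / 2) = k * L by ring]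
  field_simp
  ring

lemma integral_sq_sinhTentDeriv :
    ∫ x in (0:ℝ)..L, sinhTentDeriv L k x ^ 2 =
      k ^ 2 * (L + ∫ x in (0:ℝ)..L, sinhTent L k x ^ 2) := by
  simp_rw [sinhTentDeriv_sq]
  have hsq : Continuous fun x => sinhTent L k x ^ 2 := (continuous_sinhTent k).pow 2
  rw [intervalIntegral.integral_const_mul, intervalIntegral.integral_add intervalIntegrable_const
    (hsq.intervalIntegrable 0 L), intervalIntegral.integral_const, smul_eq_mul, mul_one, sub_zero]

end sinhTent

lemma exists_pos_le_sinh_mul_div_sub {L : ℝ} (hL : 0 < L) (M : ℝ) :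
    ∃ k > 0, M ≤ sinh (k * L) / (2 * k) - L / 2 := by
  set k := (2 * L + 4 * |M|) / L ^ 2 with hk_def
  have hk : 0 < k := by positivity
  have hkL : k * L ^ 2 = 2 * L + 4 * |M| := by rw [hk_def]; field_simp
  refine ⟨k, hk, ?_⟩
  rw [le_sub_iff_add_le, le_div_iff₀ (by positivity)]
  -- `sinh (k L) ≥ (k L)² / 2` and `k L² / 4 = L / 2 + |M|`
  nlinarith [sq_div_two_le_sinh (mul_pos hk hL).le, le_abs_self M]

/-- There is no constant `c > 0` such that `‖u‖_∞² ≤ ‖u‖‖u'‖ − c‖u‖²` for all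
`u ∈ H¹₀(0,L)`: the optimal additive correction constant is zero. -/
theorem no_additive_correction_on_interval (L : ℝ) (hL : 0 < L) :
    ¬ ∃ c : ℝ, 0 < c ∧
      ∀ u v : ℝ → ℝ, H10mem L u v → ∀ ξ ∈ Set.Icc (0:ℝ) L,
        (u ξ) ^ 2 ≤
          Real.sqrt (∫ x in (0:ℝ)..L, (u x) ^ 2) *
              Real.sqrt (∫ x in (0:ℝ)..L, (v x) ^ 2) -
            c * (∫ x in (0:ℝ)..L, (u x) ^ 2) := by
  rintro ⟨c, hc, H⟩
  obtain ⟨k, hk, hkA⟩ := exists_pos_le_sinh_mul_div_sub hL (1 / (2 * c))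
  have key := H _ _ (h10mem_sinhTent k hL.le) (L / 2) ⟨by linarith, by linarith⟩
  rw [integral_sq_sinhTentDeriv, sinhTent_half] at key
  set A := ∫ x in (0:ℝ)..L, sinhTent L k x ^ 2
  have hA : A = sinh (k * L) / (2 * k) - L / 2 := integral_sq_sinhTent k hL.le hk.ne'
  have hA_nonneg : 0 ≤ A := integral_nonneg hL.le fun x _ => sq_nonneg _
  have hcA : 1 / 2 ≤ c * A := by
    rw [← hA] at hkA
    calc 1 / 2 = c * (1 / (2 * c)) := by field_simp
      _ ≤ c * A := mul_le_mul_of_nonneg_left hkA hc.le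
  have hpeak : k * (A + L / 2) = sinh (2 * (k * (L / 2))) / 2 := by
    rw [hA, show 2 * (k * (L / 2)) = k * L by ring]; field_simp; ring
  linarith [sqrt_mul_sqrt_sq_mul_add_le hA_nonneg hL.le hk.le,
    sinh_two_mul_div_two_sub_sinh_sq_lt (k * (L / 2))]
end

section
/- For every λ ≥ 1, G(λ) := (1/(2π)) · (π√λ coth(π√λ) − 1)/λ satisfies (2D − 1/2) G(D − 1/2) < D^{1/2} − 1/π for all D ≥ 1. -/
/-!
Put `s = √(D - 1/2)`, so that `√D = √(s² + 1/2)`. Clearing denominators, the claim becomes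
`π s (4s² + 1) coth(π s) < 4π s² √(s² + 1/2) + 1`. Two estimates give it: the Taylor bound
`√(s² + 1/2) ≥ s + 1/(4s) - 1/(32 s³)`, which is sharp enough to reduce the claim to
`8π s² (4s² + 1) (coth(π s) - 1) < 8s - π`, and `coth x - 1 = 2 / (e^{2x} - 1)`, which is so small
for `s ≥ 7/10` that the last inequality follows from a degree-four Taylor bound for `e^{6s}`.
-/

open Real

theorem cosh_div_sinh_eq_one_add_two_div {x : ℝ} (hx : x ≠ 0) :
    cosh x / sinh x = 1 + 2 / (exp (2 * x) - 1) := by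
  have hsub : exp x ^ 2 - 1 ≠ 0 := by
    rw [← exp_nat_mul, sub_ne_zero, Ne, exp_eq_one_iff]; simpa using hx
  have := exp_ne_zero x
  rw [cosh_eq, sinh_eq, exp_neg, mul_comm, exp_mul, rpow_two]
  field_simp
  ring

theorem le_mul_sqrt_sq_add_half {s : ℝ} (hs : 0 ≤ s) :
    32 * s ^ 4 + 8 * s ^ 2 - 1 ≤ 32 * s ^ 3 * √(s ^ 2 + 1 / 2) := by
  set t := √(s ^ 2 + 1 / 2)
  have ht : t ^ 2 = s ^ 2 + 1 / 2 := sq_sqrt (by positivity)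
  have hB : 0 ≤ 32 * s ^ 3 * t := by positivity
  by_contra! hlt
  have hsq := mul_self_lt_mul_self hB hlt
  nlinarith [sq_nonneg s, pow_nonneg hs 4]

theorem quartic_taylor_le_exp_sub_one {y : ℝ} (hy : 0 ≤ y) :
    y + y ^ 2 / 2 + y ^ 3 / 6 + y ^ 4 / 24 ≤ exp y - 1 := by
  have h := sum_le_exp_of_nonneg hy 5
  simp only [Finset.sum_range_succ, Finset.sum_range_zero, Nat.factorial] at h
  norm_num at h
  linarith

theorem mul_sq_lt_mul_exp_two_pi_mul_sub_one {s : ℝ} (hs : 7 / 10 ≤ s) :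
    16 * π * s ^ 2 * (4 * s ^ 2 + 1) < (8 * s - π) * (exp (2 * π * s) - 1) := by
  have hπ3 := pi_gt_three
  have hπ' := pi_lt_d2
  have hexp : exp (6 * s) ≤ exp (2 * π * s) := exp_le_exp.2 (by nlinarith)
  have hT := quartic_taylor_le_exp_sub_one (y := 6 * s) (by linarith)
  have hpoly : 16 * 3.15 * s ^ 2 * (4 * s ^ 2 + 1) <
      (8 * s - 3.15) * (6 * s + (6 * s) ^ 2 / 2 + (6 * s) ^ 3 / 6 + (6 * s) ^ 4 / 24) := by
    nlinarith [pow_nonneg (show (0 : ℝ) ≤ s - 7 / 10 by linarith) 2,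
      pow_nonneg (show (0 : ℝ) ≤ s - 7 / 10 by linarith) 3,
      pow_nonneg (show (0 : ℝ) ≤ s - 7 / 10 by linarith) 4,
      pow_nonneg (show (0 : ℝ) ≤ s - 7 / 10 by linarith) 5]
  calc 16 * π * s ^ 2 * (4 * s ^ 2 + 1) ≤ 16 * 3.15 * s ^ 2 * (4 * s ^ 2 + 1) := by gcongr
    _ < (8 * s - 3.15) * (6 * s + (6 * s) ^ 2 / 2 + (6 * s) ^ 3 / 6 + (6 * s) ^ 4 / 24) := hpoly
    _ ≤ (8 * s - π) * (exp (2 * π * s) - 1) := by gcongr <;> linarith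

noncomputable def greenG (l : ℝ) : ℝ :=
  (π * √l * (cosh (π * √l) / sinh (π * √l)) - 1) / (2 * π * l)

theorem two_mul_add_half_mul_greenG_lt {l : ℝ} (hl : 49 / 100 ≤ l) :
    (2 * l + 1 / 2) * greenG l < √(l + 1 / 2) - 1 / π := by
  rw [greenG]
  set s := √l with hs_def
  have hs2 : s ^ 2 = l := sq_sqrt (by linarith)
  have hs : 7 / 10 ≤ s := by nlinarith [sqrt_nonneg l]
  have hπ := pi_pos
  have hE : 0 < exp (2 * π * s) - 1 := by
    rw [sub_pos]; exact one_lt_exp_iff.2 (by positivity)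
  set δ := 2 / (exp (2 * π * s) - 1) with hδ
  have hδ_small : 8 * π * s ^ 2 * (4 * s ^ 2 + 1) * δ < 8 * s - π := by
    rw [hδ, ← mul_div_assoc, div_lt_iff₀ hE]
    linarith [mul_sq_lt_mul_exp_two_pi_mul_sub_one hs]
  have hsqrt := mul_le_mul_of_nonneg_left (le_mul_sqrt_sq_add_half (s := s) (by linarith)) hπ.le
  rw [← hs2, cosh_div_sinh_eq_one_add_two_div (by positivity), ← mul_assoc, ← hδ,
    mul_div_assoc', div_lt_iff₀ (by positivity),
    show (√(s ^ 2 + 1 / 2) - 1 / π) * (2 * π * s ^ 2) =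
      2 * π * s ^ 2 * √(s ^ 2 + 1 / 2) - 2 * s ^ 2 by field_simp]
  -- after scaling by `16 s` the goal is the sum of `hδ_small` and `hsqrt`
  refine lt_of_mul_lt_mul_left ?_ (by linarith : (0 : ℝ) ≤ 16 * s)
  linarith

/-- With `G(λ) = (π√λ coth(π√λ) − 1)/(2πλ)`, for all `D ≥ 1`,
`(2D − 1/2) G(D − 1/2) < D^{1/2} − 1/π`. -/
theorem green_substitution_bound :
    ∀ D : ℝ, 1 ≤ D →
      (2 * D - 1 / 2) *
          ((π * Real.sqrt (D - 1 / 2) *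
              (Real.cosh (π * Real.sqrt (D - 1 / 2)) /
                Real.sinh (π * Real.sqrt (D - 1 / 2))) - 1) /
            (2 * π * (D - 1 / 2))) <
        Real.sqrt D - 1 / π := by
  intro D hD
  have h := two_mul_add_half_mul_greenG_lt (l := D - 1 / 2) (by linarith)
  rw [sub_add_cancel, greenG] at h
  convert h using 2
  ring
end

section
/- Define G(λ) = (1/(2π²))[(√(λ−1)/λ)(π/2)coth(π√(λ−1)) − (λ−1)/λ² + 1/(4λ)] for λ > 1. Then for all D ≥ √3, 2D·G(D) ≤ (1/(2π))√D − 3/(4π²). -/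
/-!
Multiplying out, the claim is `t coth(π t) + 2 / (π D) ≤ √D` with `t = √(D - 1)`.
Since `e^{2x} - 1 ≥ (2x)⁴/4!`, `coth x ≤ 1 + 3 / x⁴`; together with
`√(t² + 1) - t = 1 / (√(t² + 1) + t) ≥ 2t / (4t² + 1)` and `π > 3.14` this leaves a polynomial
inequality in `t`, which holds for `t ≥ 0.855`, i.e. for `D ≥ 1.732`.
-/

open Real

lemma pow_four_div_le_exp_sub_one {x : ℝ} (hx : 0 ≤ x) : x ^ 4 / 24 ≤ exp x - 1 := by
  have h := sum_le_exp_of_nonneg hx 5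
  norm_num [Finset.sum_range_succ, Nat.factorial] at h
  nlinarith [pow_nonneg hx 2, pow_nonneg hx 3]

lemma cosh_div_sinh_le_one_add {x : ℝ} (hx : 0 < x) : cosh x / sinh x ≤ 1 + 3 / x ^ 4 := by
  have hsinh : 0 < sinh x := sinh_pos_iff.mpr hx
  -- `sinh x · eˣ = (e^{2x} - 1) / 2`
  have hprod : x ^ 4 / 3 ≤ sinh x * exp x := by
    have h := pow_four_div_le_exp_sub_one (by positivity : 0 ≤ 2 * x)
    rw [show exp (2 * x) = exp x * exp x by rw [two_mul, exp_add]] at h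
    rw [sinh_eq, exp_neg]
    field_simp
    nlinarith
  calc cosh x / sinh x = 1 + 1 / (sinh x * exp x) := by
        rw [← sub_add_cancel (cosh x) (sinh x), cosh_sub_sinh, exp_neg]
        field_simp
        ring
    _ ≤ 1 + 3 / x ^ 4 := by
        rw [show 3 / x ^ 4 = 1 / (x ^ 4 / 3) by field_simp]
        gcongr

lemma two_mul_div_le_sqrt_sq_add_one_sub {t : ℝ} (ht : 0 < t) :
    2 * t / (4 * t ^ 2 + 1) ≤ √(t ^ 2 + 1) - t := by
  have hs : √(t ^ 2 + 1) ^ 2 = t ^ 2 + 1 := sq_sqrt (by positivity)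
  have hst : t ≤ √(t ^ 2 + 1) := le_sqrt_of_sq_le (by linarith)
  have hub : 2 * t * √(t ^ 2 + 1) ≤ 2 * t ^ 2 + 1 := by
    nlinarith [sq_nonneg (√(t ^ 2 + 1) - t)]
  rw [div_le_iff₀ (by positivity)]
  nlinarith

lemma two_mul_green_eq (D t c : ℝ) (hD : D ≠ 0) :
    2 * D * ((1 / (2 * π ^ 2)) * ((t / D) * (π / 2) * c - (D - 1) / D ^ 2 + 1 / (4 * D))) =
      (t * c + 2 / (π * D)) / (2 * π) - 3 / (4 * π ^ 2) := by
  field_simp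
  ring

lemma three_div_pi_pow_four_add_two_div_pi_le {t : ℝ} (ht : 0.855 ≤ t) :
    3 / (π ^ 4 * t ^ 3) + 2 / (π * (t ^ 2 + 1)) ≤ 2 * t / (4 * t ^ 2 + 1) := by
  have hπ : 3.14 ≤ π := pi_gt_d2.le
  have ht0 : 0 < t := by linarith
  calc 3 / (π ^ 4 * t ^ 3) + 2 / (π * (t ^ 2 + 1))
      ≤ 3 / (3.14 ^ 4 * t ^ 3) + 2 / (3.14 * (t ^ 2 + 1)) := by gcongr
    _ ≤ 2 * t / (4 * t ^ 2 + 1) := by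
      rw [div_add_div _ _ (by positivity) (by positivity),
        div_le_div_iff₀ (by positivity) (by positivity)]
      nlinarith [mul_nonneg (sub_nonneg.mpr ht) (pow_nonneg ht0.le 4),
        mul_nonneg (sub_nonneg.mpr ht) (pow_nonneg ht0.le 5),
        mul_nonneg (sub_nonneg.mpr ht) (pow_nonneg ht0.le 3),
        mul_nonneg (sub_nonneg.mpr ht) (pow_nonneg ht0.le 2),
        mul_nonneg (sub_nonneg.mpr ht) (pow_nonneg ht0.le 6),
        mul_nonneg (sub_nonneg.mpr ht) ht0.le, pow_pos ht0 7]

/-- With `G(λ) = (1/(2π²))[(√(λ−1)/λ)(π/2)coth(π√(λ−1)) − (λ−1)/λ² + 1/(4λ)]`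
(the diagonal Green's function of `(−Δ)² − λΔ` on `𝕊³`), for all `D ≥ √3`,
`2D·G(D) ≤ (1/(2π))√D − 3/(4π²)`. -/
theorem sphere3_green_substitution_bound :
    ∀ D : ℝ, Real.sqrt 3 ≤ D →
      2 * D * ((1 / (2 * π ^ 2)) *
          ((Real.sqrt (D - 1) / D) * (π / 2) *
              (Real.cosh (π * Real.sqrt (D - 1)) / Real.sinh (π * Real.sqrt (D - 1))) -
            (D - 1) / D ^ 2 + 1 / (4 * D))) ≤
        (1 / (2 * π)) * Real.sqrt D - 3 / (4 * π ^ 2) := by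
  intro D hD
  have hD3 : 1.732 ≤ D := (le_sqrt_of_sq_le (by norm_num)).trans hD
  set t := √(D - 1)
  have hDt : D = t ^ 2 + 1 := by rw [sq_sqrt (by linarith)]; ring
  have ht : 0.855 ≤ t := le_sqrt_of_sq_le (by linarith)
  have ht0 : 0 < t := by linarith
  have hcoth : t * (cosh (π * t) / sinh (π * t)) ≤ t + 3 / (π ^ 4 * t ^ 3) :=
    calc t * (cosh (π * t) / sinh (π * t)) ≤ t * (1 + 3 / (π * t) ^ 4) := by
          gcongr; exact cosh_div_sinh_le_one_add (by positivity)
      _ = t + 3 / (π ^ 4 * t ^ 3) := by field_simp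
  have hkey : t * (cosh (π * t) / sinh (π * t)) + 2 / (π * D) ≤ √D := by
    rw [hDt]
    linarith [three_div_pi_pow_four_add_two_div_pi_le ht, two_mul_div_le_sqrt_sq_add_one_sub ht0]
  rw [two_mul_green_eq D t _ (by positivity), one_div_mul_eq_div]
  gcongr
end
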